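/- arXiv:hep-lat/0311005 — 2 statements merged into one kernel-verified Lean document; each statement's English description precedes it below -/
import Mathlib

section
/- For real a with 0 < 2a|η| < 1 (η real), the limit of the continued fraction c₀/(1 − c₁/(1 − c₂/(1 − ···))) with c₀ = a²η² and c_j = a²η²/((1+2(j−1)/N)(1+2j/N)) as N → ∞ equals the continued fraction with all partial numerators a²η², whose value is 2a²η²/(1 + √(1 − 4a²η²)). -/
open Filter

/-- Depth-`ℓ` truncation of the continued fraction `c k / (1 - c (k+1) / (1 - ⋯))`. -/
noncomputable def cfracApprox (c : ℕ → ℝ) : ℕ → ℕ → ℝ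
  | 0, _ => 0
  | ℓ + 1, k => c k / (1 - cfracApprox c ℓ (k + 1))

/-- The partial numerators `c₀ = a²η²`, `c_j = a²η²/((1+2(j−1)/N)(1+2j/N))`. -/
noncomputable def cfCoeff (a η : ℝ) (N : ℕ) (j : ℕ) : ℝ :=
  if j = 0 then a ^ 2 * η ^ 2
  else a ^ 2 * η ^ 2 / ((1 + 2 * ((j : ℝ) - 1) / N) * (1 + 2 * (j : ℝ) / N))

/-!
All partial numerators lie in `[0, z]` with `z = a²η² < 1/4`, so every truncation lies in
`[0, 2z]` and every denominator `1 - (tail)` is at least `1/2`. Consecutive truncations then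
differ by at most `z (4z)^ℓ`, uniformly in the coefficients: the truncations converge to the value
of the continued fraction uniformly in `N`. Each truncation is a continuous function of finitely
many coefficients, and `c_j → a²η²` as `N → ∞`, so the limits in `ℓ` and `N` can be interchanged.
The constant continued fraction is a fixed point `x = z / (1 - x)` with `x ≤ 1/2`, i.e. the
smaller root of `x² - x + z`.
-/

open Topology Set

section Approximants

variable {c : ℕ → ℝ} {z : ℝ}

theorem cfracApprox_mem_Icc (hc : ∀ j, c j ∈ Icc 0 z) (hz : 4 * z ≤ 1) :
    ∀ ℓ k, cfracApprox c ℓ k ∈ Icc 0 (2 * z) := by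
  intro ℓ
  induction ℓ with
  | zero => intro k; exact ⟨le_rfl, show (0 : ℝ) ≤ 2 * z by linarith [(hc k).1, (hc k).2]⟩
  | succ ℓ ih =>
    intro k
    obtain ⟨hck₀, hckz⟩ := hc k
    have hden : 1 / 2 ≤ 1 - cfracApprox c ℓ (k + 1) := by linarith [(ih (k + 1)).2]
    refine ⟨div_nonneg hck₀ (by linarith), ?_⟩
    calc c k / (1 - cfracApprox c ℓ (k + 1)) ≤ c k / (1 / 2) := by gcongr
      _ ≤ 2 * z := by linarith

theorem dist_cfracApprox_succ_le (hc : ∀ j, c j ∈ Icc 0 z) (hz : 4 * z ≤ 1) :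
    ∀ ℓ k, dist (cfracApprox c ℓ k) (cfracApprox c (ℓ + 1) k) ≤ z * (4 * z) ^ ℓ := by
  intro ℓ
  induction ℓ with
  | zero => intro k; simpa [cfracApprox, Real.dist_eq, abs_of_nonneg (hc k).1] using (hc k).2
  | succ ℓ ih =>
    intro k
    set A := cfracApprox c ℓ (k + 1)
    set B := cfracApprox c (ℓ + 1) (k + 1)
    obtain ⟨hck₀, hckz⟩ := hc k
    have hz₀ : 0 ≤ z := hck₀.trans hckz
    have hA : 1 / 2 ≤ 1 - A := by linarith [(cfracApprox_mem_Icc hc hz ℓ (k + 1)).2]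
    have hB : 1 / 2 ≤ 1 - B := by linarith [(cfracApprox_mem_Icc hc hz (ℓ + 1) (k + 1)).2]
    have hAB : |A - B| ≤ z * (4 * z) ^ ℓ := by simpa [Real.dist_eq] using ih (k + 1)
    have hdiff : c k / (1 - A) - c k / (1 - B) = c k * (A - B) / ((1 - A) * (1 - B)) := by
      field_simp
      ring
    have hprod : 1 / 4 ≤ (1 - A) * (1 - B) := by nlinarith
    calc dist (c k / (1 - A)) (c k / (1 - B))
        = c k * |A - B| / ((1 - A) * (1 - B)) := by
          rw [Real.dist_eq, hdiff, abs_div, abs_mul, abs_of_nonneg hck₀,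
            abs_of_pos (by positivity : 0 < (1 - A) * (1 - B))]
      _ ≤ z * (z * (4 * z) ^ ℓ) / (1 / 4) := by gcongr
      _ = z * (4 * z) ^ (ℓ + 1) := by ring

theorem tendsto_cfracApprox {α : Type*} {l : Filter α} {c : α → ℕ → ℝ} {d : ℕ → ℝ}
    (hcd : ∀ j, Tendsto (fun x => c x j) l (𝓝 (d j))) (hd : ∀ j, d j ∈ Icc 0 z)
    (hz : 4 * z ≤ 1) :
    ∀ ℓ k, Tendsto (fun x => cfracApprox (c x) ℓ k) l (𝓝 (cfracApprox d ℓ k)) := by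
  intro ℓ
  induction ℓ with
  | zero => intro k; exact tendsto_const_nhds
  | succ ℓ ih =>
    intro k
    have hden : 1 - cfracApprox d ℓ (k + 1) ≠ 0 := by
      linarith [(cfracApprox_mem_Icc hd hz ℓ (k + 1)).2]
    exact (hcd k).div (tendsto_const_nhds.sub (ih (k + 1))) hden

theorem cfracApprox_const (z : ℝ) :
    ∀ ℓ k, cfracApprox (fun _ => z) ℓ k = cfracApprox (fun _ => z) ℓ 0 := by
  intro ℓ
  induction ℓ with
  | zero => intro k; rfl
  | succ ℓ ih => intro k; simp only [cfracApprox, ih (k + 1), ih 1]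

end Approximants

/-- The value of `c 0 / (1 - c 1 / (1 - ⋯))`; a junk value unless the truncations converge. -/
noncomputable def cfracValue (c : ℕ → ℝ) : ℝ :=
  limUnder atTop fun ℓ => cfracApprox c ℓ 0

section Value

variable {c : ℕ → ℝ} {z : ℝ}

theorem tendsto_cfracValue (hc : ∀ j, c j ∈ Icc 0 z) (hz : 4 * z < 1) :
    Tendsto (fun ℓ => cfracApprox c ℓ 0) atTop (𝓝 (cfracValue c)) :=
  (cauchySeq_of_le_geometric _ _ hz fun ℓ => dist_cfracApprox_succ_le hc hz.le ℓ 0).tendsto_limUnder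

theorem dist_cfracApprox_cfracValue_le (hc : ∀ j, c j ∈ Icc 0 z) (hz : 4 * z < 1) (ℓ : ℕ) :
    dist (cfracApprox c ℓ 0) (cfracValue c) ≤ z * (4 * z) ^ ℓ / (1 - 4 * z) :=
  dist_le_of_le_geometric_of_tendsto _ _ hz (fun ℓ => dist_cfracApprox_succ_le hc hz.le ℓ 0)
    (tendsto_cfracValue hc hz) ℓ

theorem tendstoUniformly_cfracApprox {ι : Type*} {c : ι → ℕ → ℝ} (hz₀ : 0 ≤ z)
    (hc : ∀ i j, c i j ∈ Icc 0 z) (hz : 4 * z < 1) :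
    TendstoUniformly (fun ℓ i => cfracApprox (c i) ℓ 0) (fun i => cfracValue (c i)) atTop := by
  rw [Metric.tendstoUniformly_iff]
  intro ε hε
  have hbound : Tendsto (fun ℓ : ℕ => z * (4 * z) ^ ℓ / (1 - 4 * z)) atTop (𝓝 0) := by
    simpa using ((tendsto_pow_atTop_nhds_zero_of_lt_one (by positivity) hz).const_mul z).div_const
      (1 - 4 * z)
  filter_upwards [hbound.eventually (gt_mem_nhds hε)] with ℓ hℓ i
  rw [dist_comm]
  exact (dist_cfracApprox_cfracValue_le (hc i) hz ℓ).trans_lt hℓ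

end Value

theorem eq_two_mul_div_one_add_sqrt {x z : ℝ} (h : x * (1 - x) = z) (hx : x ≤ 1 / 2) :
    x = 2 * z / (1 + Real.sqrt (1 - 4 * z)) := by
  have hs : Real.sqrt (1 - 4 * z) = 1 - 2 * x := by
    rw [← h, show 1 - 4 * (x * (1 - x)) = (1 - 2 * x) ^ 2 by ring]
    exact Real.sqrt_sq (by linarith)
  rw [hs, eq_div_iff (by linarith), ← h]
  ring

theorem cfracValue_const {z : ℝ} (hz₀ : 0 ≤ z) (hz : 4 * z < 1) :
    cfracValue (fun _ => z) = 2 * z / (1 + Real.sqrt (1 - 4 * z)) := by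
  have hc : ∀ j, (fun _ : ℕ => z) j ∈ Icc 0 z := fun _ => ⟨hz₀, le_rfl⟩
  set x := cfracValue fun _ => z
  have hlim := tendsto_cfracValue hc hz
  have hx : x ≤ 2 * z := le_of_tendsto' hlim fun ℓ => (cfracApprox_mem_Icc hc hz.le ℓ 0).2
  have hshift : ∀ ℓ, cfracApprox (fun _ => z) (ℓ + 1) 0 = z / (1 - cfracApprox (fun _ => z) ℓ 0) :=
    fun ℓ => by rw [cfracApprox, cfracApprox_const z ℓ 1]
  have hfix : x = z / (1 - x) :=
    tendsto_nhds_unique (((tendsto_add_atTop_iff_nat 1).2 hlim).congr hshift)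
      (tendsto_const_nhds.div (tendsto_const_nhds.sub hlim) (by linarith))
  exact eq_two_mul_div_one_add_sqrt ((eq_div_iff (by linarith)).1 hfix) (by linarith)

theorem cfCoeff_mem_Icc (a η : ℝ) (N j : ℕ) : cfCoeff a η N j ∈ Icc 0 (a ^ 2 * η ^ 2) := by
  unfold cfCoeff
  split_ifs with hj
  · exact ⟨by positivity, le_rfl⟩
  · have hj₁ : (1 : ℝ) ≤ j := Nat.one_le_cast.2 (Nat.pos_of_ne_zero hj)
    have h₁ : 1 ≤ 1 + 2 * ((j : ℝ) - 1) / N :=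
      le_add_of_nonneg_right (div_nonneg (by linarith) N.cast_nonneg)
    have h₂ : 1 ≤ 1 + 2 * (j : ℝ) / N := le_add_of_nonneg_right (by positivity)
    have hden := one_le_mul_of_one_le_of_one_le h₁ h₂
    exact ⟨div_nonneg (by positivity) (by linarith), div_le_self (by positivity) hden⟩

theorem tendsto_cfCoeff (a η : ℝ) (j : ℕ) :
    Tendsto (fun N : ℕ => cfCoeff a η N j) atTop (𝓝 (a ^ 2 * η ^ 2)) := by
  rcases eq_or_ne j 0 with rfl | hj
  · simp [cfCoeff]
  · simp only [cfCoeff, hj, if_false]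
    have h₁ := (tendsto_const_div_atTop_nhds_zero_nat (2 * ((j : ℝ) - 1))).const_add 1
    have h₂ := (tendsto_const_div_atTop_nhds_zero_nat (2 * (j : ℝ))).const_add 1
    have h := (tendsto_const_nhds (x := a ^ 2 * η ^ 2)).div (h₁.mul h₂) (by norm_num)
    rwa [add_zero, mul_one, div_one] at h

theorem cfrac_limit_largeN_general (a η : ℝ) (hη : 0 < 2 * a * |η|)
    (hη' : 2 * a * |η| < 1) :
    ∃ v : ℕ → ℝ,
      (∀ N : ℕ, 1 ≤ N →
        Tendsto (fun ℓ => cfracApprox (cfCoeff a η N) ℓ 0) atTop (nhds (v N))) ∧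
      Tendsto (fun ℓ => cfracApprox (fun _ => a ^ 2 * η ^ 2) ℓ 0) atTop
        (nhds (2 * a ^ 2 * η ^ 2 / (1 + Real.sqrt (1 - 4 * a ^ 2 * η ^ 2)))) ∧
      Tendsto v atTop
        (nhds (2 * a ^ 2 * η ^ 2 / (1 + Real.sqrt (1 - 4 * a ^ 2 * η ^ 2)))) := by
  have hz : 4 * (a ^ 2 * η ^ 2) < 1 :=
    calc 4 * (a ^ 2 * η ^ 2) = (2 * a * |η|) ^ 2 := by rw [mul_pow, mul_pow, sq_abs]; ring
      _ < 1 := pow_lt_one₀ hη.le hη' two_ne_zero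
  have hc := cfCoeff_mem_Icc a η
  have hconst : ∀ j, (fun _ : ℕ => a ^ 2 * η ^ 2) j ∈ Icc 0 (a ^ 2 * η ^ 2) :=
    fun _ => ⟨by positivity, le_rfl⟩
  rw [show 2 * a ^ 2 * η ^ 2 = 2 * (a ^ 2 * η ^ 2) by ring,
    show 4 * a ^ 2 * η ^ 2 = 4 * (a ^ 2 * η ^ 2) by ring, ← cfracValue_const (by positivity) hz]
  have hlim := tendsto_cfracValue hconst hz
  refine ⟨fun N => cfracValue (cfCoeff a η N), fun N _ => tendsto_cfracValue (hc N) hz, hlim, ?_⟩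
  exact (tendstoUniformly_cfracApprox (by positivity) hc hz).tendsto_of_eventually_tendsto
    (Eventually.of_forall fun ℓ => tendsto_cfracApprox (tendsto_cfCoeff a η) hconst hz.le ℓ 0)
    hlim

/-- For `0 < 2a|η| < 1`, the continued fraction with numerators `c_j = a²η²/((1+2(j−1)/N)(1+2j/N))`
converges for each `N`, its value tends as `N → ∞` to the value of the continued fraction with
all partial numerators `a²η²`, which equals `2a²η²/(1+√(1−4a²η²))`. -/
theorem cfrac_limit_largeN (a η : ℝ) (ha : 0 < a) (hη : 0 < 2 * a * |η|)
    (hη' : 2 * a * |η| < 1) :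
    ∃ v : ℕ → ℝ,
      (∀ N : ℕ, 1 ≤ N →
        Tendsto (fun ℓ => cfracApprox (cfCoeff a η N) ℓ 0) atTop (nhds (v N))) ∧
      Tendsto (fun ℓ => cfracApprox (fun _ => a ^ 2 * η ^ 2) ℓ 0) atTop
        (nhds (2 * a ^ 2 * η ^ 2 / (1 + Real.sqrt (1 - 4 * a ^ 2 * η ^ 2)))) ∧
      Tendsto v atTop
        (nhds (2 * a ^ 2 * η ^ 2 / (1 + Real.sqrt (1 - 4 * a ^ 2 * η ^ 2)))) :=
  cfrac_limit_largeN_general a η hη hη'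
end

section
/- Define w₀(p) = 1/(2p) − α²/(4p²), and recursively w_n(p) = (1/(2p²))·(p − 1/(p⁻¹+ω−1) + (4ω/(p⁻¹+ω−1)²)·w_{n−1}(ω/(p⁻¹+ω−1))). Then for all n ≥ 1 and p > 0, w_n(p) = (1/(2p²))·(p + (1/2)Σ_{j=1}^n 2^j/(ω^j − 1 + p⁻¹) − (1/2)(2/ω)^n α²). -/
/-!
The closed form is also correct for `n = 0`, so it follows by induction from `n = 0`. The point of
the substitution `q = ω / (p⁻¹ + ω - 1)` is that `ω ^ j - 1 + q⁻¹ = (ω ^ (j + 1) - 1 + p⁻¹) / ω`.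
Hence `2 / ω` times the sum at `q` is the sum at `p` without its `j = 1` term, and that term,
`2 / (p⁻¹ + ω - 1)`, is the one the recursion contributes.
-/

open Finset

theorem Finset.sum_Icc_one_succ {M : Type*} [AddCommMonoid M] (f : ℕ → M) (n : ℕ) :
    ∑ j ∈ Icc 1 (n + 1), f j = f 1 + ∑ j ∈ Icc 1 n, f (j + 1) := by
  induction n with
  | zero => simp
  | succ n ih => rw [sum_Icc_succ_top (by omega), ih, sum_Icc_succ_top (by omega), add_assoc]

noncomputable def wClosedForm (α ω : ℝ) (n : ℕ) (p : ℝ) : ℝ :=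
  1 / (2 * p ^ 2) * (p + 1 / 2 * ∑ j ∈ Icc 1 n, 2 ^ j / (ω ^ j - 1 + p⁻¹)
    - 1 / 2 * (2 / ω) ^ n * α ^ 2)

section

variable {α ω : ℝ}

theorem wClosedForm_zero (p : ℝ) : wClosedForm α ω 0 p = 1 / (2 * p) - α ^ 2 / (4 * p ^ 2) := by
  rcases eq_or_ne p 0 with rfl | hp
  · simp [wClosedForm]
  · simp only [wClosedForm, Icc_eq_empty_of_lt zero_lt_one, sum_empty]
    field_simp
    ring

theorem pow_sub_one_add_inv_div (hω : ω ≠ 0) (p : ℝ) (j : ℕ) :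
    ω ^ j - 1 + (ω / (p⁻¹ + ω - 1))⁻¹ = (ω ^ (j + 1) - 1 + p⁻¹) / ω := by
  rw [inv_div, pow_succ]
  field_simp
  ring

theorem wClosedForm_succ (hω : ω ≠ 0) {p : ℝ} (hp : p ≠ 0) (hD : p⁻¹ + ω - 1 ≠ 0) (n : ℕ) :
    wClosedForm α ω (n + 1) p = 1 / (2 * p ^ 2) * (p - 1 / (p⁻¹ + ω - 1)
      + 4 * ω / (p⁻¹ + ω - 1) ^ 2 * wClosedForm α ω n (ω / (p⁻¹ + ω - 1))) := by
  have hsum : ∑ j ∈ Icc 1 (n + 1), 2 ^ j / (ω ^ j - 1 + p⁻¹) = 2 / (p⁻¹ + ω - 1)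
      + 2 / ω * ∑ j ∈ Icc 1 n, 2 ^ j / (ω ^ j - 1 + (ω / (p⁻¹ + ω - 1))⁻¹) := by
    simp only [sum_Icc_one_succ, pow_sub_one_add_inv_div hω, mul_sum]
    congr 1
    · ring_nf
    · refine sum_congr rfl fun j _ => ?_
      field_simp
      ring
  simp only [wClosedForm, hsum, div_pow]
  generalize ∑ j ∈ Icc 1 n, 2 ^ j / (ω ^ j - 1 + (ω / (p⁻¹ + ω - 1))⁻¹) = S
  generalize p⁻¹ + ω - 1 = D at hD ⊢
  field_simp
  ring

end

theorem wn_closed_form_general (α ω : ℝ) (hω : 1 < ω)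
    (w : ℕ → ℝ → ℝ)
    (h0 : ∀ p : ℝ, w 0 p = 1 / (2 * p) - α ^ 2 / (4 * p ^ 2))
    (hrec : ∀ (n : ℕ) (p : ℝ), w (n + 1) p =
      (1 / (2 * p ^ 2)) * (p - 1 / (p⁻¹ + ω - 1)
        + (4 * ω / (p⁻¹ + ω - 1) ^ 2) * w n (ω / (p⁻¹ + ω - 1)))) :
    ∀ n : ℕ, 1 ≤ n → ∀ p : ℝ, 0 < p →
      w n p = (1 / (2 * p ^ 2)) *
        (p + (1 / 2) * ∑ j ∈ Icc 1 n, 2 ^ j / (ω ^ j - 1 + p⁻¹)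
          - (1 / 2) * (2 / ω) ^ n * α ^ 2) := by
  suffices h : ∀ n p, 0 < p → w n p = wClosedForm α ω n p from fun n _ p hp => h n p hp
  intro n
  induction n with
  | zero => exact fun p _ => (h0 p).trans (wClosedForm_zero p).symm
  | succ n ih =>
    intro p hp
    have hD : 0 < p⁻¹ + ω - 1 := by linarith [inv_pos.mpr hp]
    rw [hrec, ih _ (div_pos (by linarith) hD), wClosedForm_succ (by linarith) hp.ne' hD.ne']

/-- Closed form for the recursion `w₀(p) = 1/(2p) − α²/(4p²)`,
`w_n(p) = (1/(2p²))(p − 1/(p⁻¹+ω−1) + (4ω/(p⁻¹+ω−1)²)w_{n−1}(ω/(p⁻¹+ω−1)))`: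
for `n ≥ 1`, `w_n(p) = (1/(2p²))(p + (1/2)Σ_{j=1}^n 2^j/(ω^j−1+p⁻¹) − (1/2)(2/ω)^n α²)`. -/
theorem wn_closed_form (α ω : ℝ) (hα : 0 < α) (hω : 1 < ω)
    (w : ℕ → ℝ → ℝ)
    (h0 : ∀ p : ℝ, w 0 p = 1 / (2 * p) - α ^ 2 / (4 * p ^ 2))
    (hrec : ∀ (n : ℕ) (p : ℝ), w (n + 1) p =
      (1 / (2 * p ^ 2)) * (p - 1 / (p⁻¹ + ω - 1)
        + (4 * ω / (p⁻¹ + ω - 1) ^ 2) * w n (ω / (p⁻¹ + ω - 1)))) :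
    ∀ n : ℕ, 1 ≤ n → ∀ p : ℝ, 0 < p →
      w n p = (1 / (2 * p ^ 2)) *
        (p + (1 / 2) * ∑ j ∈ Icc 1 n, 2 ^ j / (ω ^ j - 1 + p⁻¹)
          - (1 / 2) * (2 / ω) ^ n * α ^ 2) :=
  wn_closed_form_general α ω hω w h0 hrec
end
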